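/- Monotonicity of the interim belief for binary experiments: let E = ({l,h}, p_L, p_H) be a binary experiment that is strictly informative (p_H(h)·p_L(l) > p_H(l)·p_L(h)) and let n ≥ 2. (i) For α ∈ [0,1] let σ_α be the strategy with σ_α(h) = 1 and σ_α(l) = α; then α ↦ Ψ(σ_α) is strictly increasing on [0,1]. (ii) For β ∈ (0,1] let τ_β be the strategy with τ_β(l) = 0 and τ_β(h) = β; then β ↦ Ψ(τ_β) is strictly decreasing on (0,1]. -/

import Mathlib

open Finset Filter Topology

noncomputable section

/-- Probability that a single buyer rejects the seller, given conditional signal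
distribution `p` and strategy `σ`: `r_θ(σ) = 1 - Σ_s p_θ(s)·σ(s)`. -/
def rej {m : ℕ} (p σ : Fin m → ℝ) : ℝ := 1 - ∑ s, p s * σ s

/-- `ν_θ(σ) = (1/n)·Σ_{k=0}^{n-1} r_θ(σ)^k`: probability of being visited. -/
def visit (n : ℕ) {m : ℕ} (p σ : Fin m → ℝ) : ℝ :=
  (1 / (n : ℝ)) * ∑ k ∈ Finset.range n, rej p σ ^ k

/-- Interim belief `Ψ(σ) = ρ·ν_H(σ) / (ρ·ν_H(σ) + (1-ρ)·ν_L(σ))`. -/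
def interim (ρ : ℝ) (n : ℕ) {m : ℕ} (pL pH σ : Fin m → ℝ) : ℝ :=
  ρ * visit n pH σ / (ρ * visit n pH σ + (1 - ρ) * visit n pL σ)

/-- Posterior belief `Q_ψ(s) = ψ·p_H(s) / (ψ·p_H(s) + (1-ψ)·p_L(s))`. -/
def post {m : ℕ} (ψ : ℝ) (pL pH : Fin m → ℝ) (s : Fin m) : ℝ :=
  ψ * pH s / (ψ * pH s + (1 - ψ) * pL s)

/-- A strategy maps each signal to an acceptance probability in `[0,1]`. -/
def IsStrategy {m : ℕ} (σ : Fin m → ℝ) : Prop := ∀ s, 0 ≤ σ s ∧ σ s ≤ 1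

/-- `σ` is an equilibrium strategy: with `ψ* = Ψ(σ)`, accept for sure when the
posterior exceeds `c`, reject for sure when it falls below `c`. -/
def IsEquilibrium (ρ c : ℝ) (n : ℕ) {m : ℕ} (pL pH σ : Fin m → ℝ) : Prop :=
  IsStrategy σ ∧
  ∀ s : Fin m,
    (c < post (interim ρ n pL pH σ) pL pH s → σ s = 1) ∧
    (post (interim ρ n pL pH σ) pL pH s < c → σ s = 0)

/-- Total surplus `Π(σ) = (1-c)·ρ·(1-r_H(σ)^n) - c·(1-ρ)·(1-r_L(σ)^n)`. -/
def surplus (ρ c : ℝ) (n : ℕ) {m : ℕ} (pL pH σ : Fin m → ℝ) : ℝ :=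
  (1 - c) * ρ * (1 - rej pH σ ^ n) - c * (1 - ρ) * (1 - rej pL σ ^ n)

/-- The most selective equilibrium strategy. -/
def MostSelective (ρ c : ℝ) (n : ℕ) {m : ℕ} (pL pH σ : Fin m → ℝ) : Prop :=
  IsEquilibrium ρ c n pL pH σ ∧
  ∀ σ' : Fin m → ℝ, IsEquilibrium ρ c n pL pH σ' → ∀ s, σ s ≤ σ' s

/-- The least selective equilibrium strategy. -/
def LeastSelective (ρ c : ℝ) (n : ℕ) {m : ℕ} (pL pH σ : Fin m → ℝ) : Prop :=
  IsEquilibrium ρ c n pL pH σ ∧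
  ∀ σ' : Fin m → ℝ, IsEquilibrium ρ c n pL pH σ' → ∀ s, σ' s ≤ σ s

/-- An experiment: `p_L, p_H` are probability mass functions with full joint support,
indexed so that likelihood ratios are nondecreasing. -/
def IsExperiment {m : ℕ} (pL pH : Fin m → ℝ) : Prop :=
  (∀ s, 0 ≤ pL s) ∧ (∀ s, 0 ≤ pH s) ∧
  (∑ s, pL s = 1) ∧ (∑ s, pH s = 1) ∧
  (∀ s, 0 < pL s + pH s) ∧
  (∀ i j : Fin m, i ≤ j → pH i * pL j ≤ pH j * pL i)

/-- A strategy is monotone: a positive acceptance probability at `s_i` forces sure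
acceptance at every signal with strictly higher likelihood ratio. -/
def MonotoneStrategy {m : ℕ} (pL pH σ : Fin m → ℝ) : Prop :=
  ∀ i j : Fin m, 0 < σ i → pH i * pL j < pH j * pL i → σ j = 1

/-!
The interim belief is a strictly increasing function of the likelihood ratio `ν_H / ν_L`, and
`n ν_θ = S(r_θ)` with `S(r) = ∑_{k<n} r ^ k`.

(i) Here `r_θ = p_θ(l) (1 - α)`, so the claim is that `S(x y)` is strictly log-supermodular in
`(x, y)`: symmetrising the double sum for `S(p s) S(q t) - S(p t) S(q s)` gives the terms
`(q^j p^k - q^k p^j) (t^j s^k - t^k s^j)`, products of two factors with the sign of `j - k`.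

(ii) Here `r_θ = 1 - p_θ(h) β`. Differentiating `β ↦ S(1 - p_L(h) β) / S(1 - p_H(h) β)` and using
`(1 - r) S'(r) = S(r) - n r^(n-1)` (the derivative of `S(r) (r - 1) = r^n - 1`), the sign of the
derivative is that of `y^(n-1) S(x) - x^(n-1) S(y)` for `x < y`, which is positive because
`S(r) / r^(n-1) = ∑_{j<n} r^(-j)` decreases in `r`.
-/

lemma pow_mul_pow_le_pow_mul_pow {R : Type*} [CommSemiring R] [PartialOrder R] [IsOrderedRing R]
    {u v : R} (hv : 0 ≤ v) (hvu : v ≤ u) {j k : ℕ} (hjk : j ≤ k) :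
    u ^ j * v ^ k ≤ u ^ k * v ^ j := by
  obtain ⟨d, rfl⟩ := Nat.exists_eq_add_of_le hjk
  calc u ^ j * v ^ (j + d) = u ^ j * v ^ j * v ^ d := by ring
    _ ≤ u ^ j * v ^ j * u ^ d :=
        mul_le_mul_of_nonneg_left (pow_le_pow_left₀ hv hvu d)
          (mul_nonneg (pow_nonneg (hv.trans hvu) j) (pow_nonneg hv j))
    _ = u ^ (j + d) * v ^ j := by ring

lemma pow_mul_pow_sub_mul_nonneg {p q s t : ℝ} (hp : 0 ≤ p) (hpq : p ≤ q) (hs : 0 ≤ s)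
    (hst : s ≤ t) (j k : ℕ) :
    0 ≤ (q ^ j * p ^ k - q ^ k * p ^ j) * (t ^ j * s ^ k - t ^ k * s ^ j) := by
  rcases le_total j k with hjk | hkj
  · exact mul_nonneg_of_nonpos_of_nonpos
      (sub_nonpos.2 (pow_mul_pow_le_pow_mul_pow hp hpq hjk))
      (sub_nonpos.2 (pow_mul_pow_le_pow_mul_pow hs hst hjk))
  · exact mul_nonneg (sub_nonneg.2 (pow_mul_pow_le_pow_mul_pow hp hpq hkj))
      (sub_nonneg.2 (pow_mul_pow_le_pow_mul_pow hs hst hkj))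

lemma geom_sum_mul_mul_geom_sum_mul_lt {n : ℕ} (hn : 2 ≤ n) {p q s t : ℝ} (hp : 0 ≤ p)
    (hpq : p < q) (hs : 0 ≤ s) (hst : s < t) :
    (∑ k ∈ range n, (p * t) ^ k) * ∑ k ∈ range n, (q * s) ^ k
      < (∑ k ∈ range n, (p * s) ^ k) * ∑ k ∈ range n, (q * t) ^ k := by
  set T : ℕ → ℕ → ℝ := fun j k => (q ^ j * p ^ k - q ^ k * p ^ j) * (t ^ j * s ^ k - t ^ k * s ^ j)
  have hsymm : 2 * ((∑ k ∈ range n, (p * s) ^ k) * (∑ k ∈ range n, (q * t) ^ k)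
      - (∑ k ∈ range n, (p * t) ^ k) * ∑ k ∈ range n, (q * s) ^ k)
      = ∑ j ∈ range n, ∑ k ∈ range n, T j k := by
    set f : ℕ → ℕ → ℝ := fun j k => (p * s) ^ j * (q * t) ^ k - (p * t) ^ j * (q * s) ^ k
    have hswap : ∑ j ∈ range n, ∑ k ∈ range n, f j k = ∑ j ∈ range n, ∑ k ∈ range n, f k j :=
      sum_comm
    calc _ = ∑ j ∈ range n, ∑ k ∈ range n, f j k + ∑ j ∈ range n, ∑ k ∈ range n, f k j := by
          rw [← hswap, two_mul, sum_mul_sum, sum_mul_sum, ← sum_sub_distrib]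
          simp only [f, sum_sub_distrib]
      _ = _ := by
          simp only [← sum_add_distrib]
          exact sum_congr rfl fun j _ => sum_congr rfl fun k _ => by simp only [f, T]; ring
  have hT := pow_mul_pow_sub_mul_nonneg hp hpq.le hs hst.le
  have h10 : T 1 0 ≤ ∑ j ∈ range n, ∑ k ∈ range n, T j k :=
    (single_le_sum (fun k _ => hT 1 k) (mem_range.2 (by omega))).trans
      (single_le_sum (f := fun j => ∑ k ∈ range n, T j k)
        (fun j _ => sum_nonneg fun k _ => hT j k) (mem_range.2 (by omega)))
  have : 0 < T 1 0 := by simpa [T] using mul_pos (sub_pos.2 hpq) (sub_pos.2 hst)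
  linarith

lemma pow_pred_mul_geom_sum_lt {n : ℕ} (hn : 2 ≤ n) {u v : ℝ} (hv : 0 ≤ v) (hvu : v < u) :
    v ^ (n - 1) * ∑ k ∈ range n, u ^ k < u ^ (n - 1) * ∑ k ∈ range n, v ^ k := by
  rw [mul_sum, mul_sum]
  refine sum_lt_sum (fun k hk => ?_) ⟨0, mem_range.2 (by omega), ?_⟩
  · have := pow_mul_pow_le_pow_mul_pow hv hvu.le (Nat.le_sub_one_of_lt (mem_range.1 hk))
    linarith
  · simpa using pow_lt_pow_left₀ hvu hv (by omega)

lemma deriv_geom_sum_mul_sub_one_add_geom_sum (n : ℕ) (x : ℝ) :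
    deriv (fun y : ℝ => ∑ k ∈ range n, y ^ k) x * (x - 1) + ∑ k ∈ range n, x ^ k
      = n * x ^ (n - 1) := by
  have hprod : HasDerivAt (fun y : ℝ => y ^ n - 1)
      (deriv (fun y : ℝ => ∑ k ∈ range n, y ^ k) x * (x - 1) + (∑ k ∈ range n, x ^ k) * 1) x := by
    simpa only [geom_sum_mul] using ((show Differentiable ℝ (fun y : ℝ => ∑ k ∈ range n, y ^ k)
      by fun_prop) x).hasDerivAt.fun_mul ((hasDerivAt_id' x).sub_const 1)
  simpa using hprod.unique ((hasDerivAt_pow n x).sub_const 1)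

lemma strictMonoOn_div_of_hasDerivAt {f g f' g' : ℝ → ℝ} {a b : ℝ}
    (hf : ∀ x, HasDerivAt f (f' x) x) (hg : ∀ x, HasDerivAt g (g' x) x)
    (hg_pos : ∀ x ∈ Set.Icc a b, 0 < g x) (hfg : ∀ x ∈ Set.Ioo a b, f x * g' x < f' x * g x) :
    StrictMonoOn (fun x => f x / g x) (Set.Icc a b) := by
  refine strictMonoOn_of_hasDerivWithinAt_pos (convex_Icc a b)
    (fun x hx => ((hf x).continuousAt.div (hg x).continuousAt (hg_pos x hx).ne').continuousWithinAt)
    (fun x hx => ((hf x).div (hg x) (hg_pos x (interior_subset hx)).ne').hasDerivWithinAt)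
    fun x hx => div_pos (sub_pos.2 ?_) (pow_pos (hg_pos x (interior_subset hx)) 2)
  rw [interior_Icc] at hx
  exact hfg x hx

lemma geom_sum_one_sub_mul_div_strictMonoOn {n : ℕ} (hn : 2 ≤ n) {p q : ℝ} (hqp : q < p)
    (hp : p ≤ 1) :
    StrictMonoOn (fun β => (∑ k ∈ range n, (1 - q * β) ^ k) / ∑ k ∈ range n, (1 - p * β) ^ k)
      (Set.Icc 0 1) := by
  set S : ℝ → ℝ := fun y => ∑ k ∈ range n, y ^ k
  have hS : ∀ c β : ℝ, HasDerivAt (fun β => S (1 - c * β)) (deriv S (1 - c * β) * -c) β :=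
    fun c β => ((show Differentiable ℝ S by fun_prop) _).hasDerivAt.comp β
      (by simpa using ((hasDerivAt_id β).const_mul c).const_sub 1)
  refine strictMonoOn_div_of_hasDerivAt (hS q) (hS p)
    (fun β hβ => geom_sum_pos (by nlinarith [hβ.1, hβ.2]) (by omega)) fun β ⟨hβ0, hβ1⟩ => ?_
  have hx := deriv_geom_sum_mul_sub_one_add_geom_sum n (1 - p * β)
  have hy := deriv_geom_sum_mul_sub_one_add_geom_sum n (1 - q * β)
  have key := pow_pred_mul_geom_sum_lt hn (by nlinarith : 0 ≤ 1 - p * β)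
    (by nlinarith : 1 - p * β < 1 - q * β)
  have hn0 : (0 : ℝ) < n := by exact_mod_cast (by omega : 0 < n)
  refine lt_of_mul_lt_mul_left ?_ hβ0.le
  have hW : β * (deriv S (1 - q * β) * -q * S (1 - p * β))
        - β * (S (1 - q * β) * (deriv S (1 - p * β) * -p))
      = n * ((1 - q * β) ^ (n - 1) * S (1 - p * β) - (1 - p * β) ^ (n - 1) * S (1 - q * β)) := by
    linear_combination S (1 - p * β) * hy - S (1 - q * β) * hx
  linarith [mul_pos hn0 (sub_pos.2 key)]

lemma geom_sum_one_sub_mul_mul_lt {n : ℕ} (hn : 2 ≤ n) {p q s t : ℝ} (hqp : q < p) (hp : p ≤ 1)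
    (hs : 0 ≤ s) (hst : s < t) (ht : t ≤ 1) :
    (∑ k ∈ range n, (1 - p * t) ^ k) * ∑ k ∈ range n, (1 - q * s) ^ k
      < (∑ k ∈ range n, (1 - p * s) ^ k) * ∑ k ∈ range n, (1 - q * t) ^ k := by
  have hpos : ∀ x ∈ Set.Icc (0 : ℝ) 1, 0 < ∑ k ∈ range n, (1 - p * x) ^ k :=
    fun x hx => geom_sum_pos (by nlinarith [hx.1, hx.2]) (by omega)
  have hs' : s ∈ Set.Icc (0 : ℝ) 1 := ⟨hs, by linarith⟩
  have ht' : t ∈ Set.Icc (0 : ℝ) 1 := ⟨by linarith, ht⟩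
  have := geom_sum_one_sub_mul_div_strictMonoOn hn hqp hp hs' ht' hst
  rw [div_lt_div_iff₀ (hpos s hs') (hpos t ht')] at this
  linarith

lemma rej_nonneg {m : ℕ} {p σ : Fin m → ℝ} (hp : ∀ s, 0 ≤ p s) (hp_sum : ∑ s, p s = 1)
    (hσ : ∀ s, σ s ≤ 1) : 0 ≤ rej p σ := by
  have : ∑ s, p s * σ s ≤ ∑ s, p s := sum_le_sum fun s _ => mul_le_of_le_one_right (hp s) (hσ s)
  unfold rej
  linarith

lemma rej_accept_high (p : Fin 2 → ℝ) (hp_sum : ∑ s, p s = 1) (a : ℝ) :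
    rej p (fun s => if s = 0 then a else 1) = p 0 * (1 - a) := by
  rw [Fin.sum_univ_two] at hp_sum
  simp only [rej, Fin.sum_univ_two, Fin.isValue, if_true, one_ne_zero, if_false]
  linear_combination -hp_sum

lemma rej_reject_low (p : Fin 2 → ℝ) (b : ℝ) :
    rej p (fun s => if s = 0 then 0 else b) = 1 - p 1 * b := by
  simp [rej, Fin.sum_univ_two]

lemma bayes_lt_bayes {ρ A B A' B' : ℝ} (hρ : ρ ∈ Set.Ioo (0 : ℝ) 1) (hA : 0 < A) (hB : 0 < B)
    (hA' : 0 < A') (hB' : 0 < B') (h : A * B' < A' * B) :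
    ρ * A / (ρ * A + (1 - ρ) * B) < ρ * A' / (ρ * A' + (1 - ρ) * B') := by
  obtain ⟨hρ0, hρ1⟩ := hρ
  have hρ1' : 0 < 1 - ρ := sub_pos.2 hρ1
  rw [div_lt_div_iff₀ (by positivity) (by positivity)]
  nlinarith [mul_pos hρ0 hρ1']

lemma interim_eq_geom_sum {n : ℕ} (hn : n ≠ 0) (ρ : ℝ) {m : ℕ} (pL pH σ : Fin m → ℝ) :
    interim ρ n pL pH σ
      = ρ * (∑ k ∈ range n, rej pH σ ^ k)
        / (ρ * ∑ k ∈ range n, rej pH σ ^ k + (1 - ρ) * ∑ k ∈ range n, rej pL σ ^ k) := by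
  have : (1 / (n : ℝ)) ≠ 0 := by simpa using hn
  rw [← mul_div_mul_left _ _ this]
  simp only [interim, visit]
  congr 1 <;> ring

lemma interim_lt_interim {ρ : ℝ} (hρ : ρ ∈ Set.Ioo (0 : ℝ) 1) {n : ℕ} (hn : n ≠ 0) {m : ℕ}
    {pL pH σ σ' : Fin m → ℝ} (hL : ∀ s, 0 ≤ pL s) (hH : ∀ s, 0 ≤ pH s)
    (hL_sum : ∑ s, pL s = 1) (hH_sum : ∑ s, pH s = 1) (hσ : ∀ s, σ s ≤ 1) (hσ' : ∀ s, σ' s ≤ 1)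
    (h : (∑ k ∈ range n, rej pH σ ^ k) * ∑ k ∈ range n, rej pL σ' ^ k
      < (∑ k ∈ range n, rej pH σ' ^ k) * ∑ k ∈ range n, rej pL σ ^ k) :
    interim ρ n pL pH σ < interim ρ n pL pH σ' := by
  rw [interim_eq_geom_sum hn, interim_eq_geom_sum hn]
  exact bayes_lt_bayes hρ (geom_sum_pos (rej_nonneg hH hH_sum hσ) hn)
    (geom_sum_pos (rej_nonneg hL hL_sum hσ) hn) (geom_sum_pos (rej_nonneg hH hH_sum hσ') hn)
    (geom_sum_pos (rej_nonneg hL hL_sum hσ') hn) h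

/-- monotonicity of the interim belief for a strictly informative binary
experiment (`0` is the low signal, `1` the high signal) with `n ≥ 2` buyers.
(i) With sure acceptance on the high signal, the interim belief strictly increases in
the acceptance probability on the low signal. (ii) With sure rejection on the low
signal, the interim belief strictly decreases in the acceptance probability on the
high signal (over `(0,1]`). -/
theorem interim_belief_monotone_binary
    (ρ : ℝ) (hρ : ρ ∈ Set.Ioo (0:ℝ) 1)
    (n : ℕ) (hn : 2 ≤ n)
    (pL pH : Fin 2 → ℝ) (hE : IsExperiment pL pH)
    (hstrict : pH 0 * pL 1 < pH 1 * pL 0) :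
    (∀ a b : ℝ, 0 ≤ a → a < b → b ≤ 1 →
      interim ρ n pL pH (fun s => if s = 0 then a else 1) <
        interim ρ n pL pH (fun s => if s = 0 then b else 1)) ∧
    (∀ a b : ℝ, 0 < a → a < b → b ≤ 1 →
      interim ρ n pL pH (fun s => if s = 0 then 0 else b) <
        interim ρ n pL pH (fun s => if s = 0 then 0 else a)) := by
  obtain ⟨hL, hH, hL_sum, hH_sum, -⟩ := hE
  have hL01 := Fin.sum_univ_two pL ▸ hL_sum
  have hH01 := Fin.sum_univ_two pH ▸ hH_sum
  have hlow : pH 0 < pL 0 := by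
    rw [show pL 1 = 1 - pL 0 by linarith, show pH 1 = 1 - pH 0 by linarith] at hstrict
    linarith
  constructor
  · intro a b ha hab hb
    refine interim_lt_interim hρ (by omega) hL hH hL_sum hH_sum
      (by intro s; split_ifs <;> linarith) (by intro s; split_ifs <;> linarith) ?_
    simp only [rej_accept_high pL hL_sum, rej_accept_high pH hH_sum]
    exact geom_sum_mul_mul_geom_sum_mul_lt hn (hH 0) hlow (by linarith) (by linarith)
  · intro a b ha hab hb
    refine interim_lt_interim hρ (by omega) hL hH hL_sum hH_sum
      (by intro s; split_ifs <;> linarith) (by intro s; split_ifs <;> linarith) ?_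
    simp only [rej_reject_low]
    exact geom_sum_one_sub_mul_mul_lt hn (by linarith) (by linarith [hH 0]) ha.le hab hb
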